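/- arXiv:2305.12946 — 3 statements merged into one kernel-verified Lean document; each statement's English description precedes it below -/
import Mathlib

section
/- Let A be a real N×N Hurwitz matrix and B a real N×m matrix. Then the function t ↦ e^{tA} B Bᵀ e^{tAᵀ} is integrable on [0,∞), and the controllability Gramian P := ∫₀^∞ e^{tA} B Bᵀ e^{tAᵀ} dt is a symmetric positive semidefinite matrix satisfying the Lyapunov equation A P + P Aᵀ = −B Bᵀ. -/
/-! Every eigenvalue of `e^A` is `e^μ` for an eigenvalue `μ` of `A` (take a common eigenvector of
the commuting matrices `A` and `e^A`), so for Hurwitz `A` the spectral radius of `e^A` is `< 1`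
and, by Gelfand's formula, some `e^{kA}` is a contraction. The semigroup law then gives
`‖e^{tA}‖ ≤ C e^{-ct}`. Hence `G t = e^{tA} B Bᵀ e^{tAᵀ} = (e^{tA} B) (e^{tA} B)ᵀ` is positive
semidefinite and decays exponentially, and integrating `G' = A G + G Aᵀ` over `[0, ∞)` gives
`A P + P Aᵀ = -G 0 = -B Bᵀ`. -/

open Matrix MeasureTheory

/-- A real square matrix is Hurwitz if every eigenvalue of it, regarded as a complex
matrix, has negative real part. -/
def Matrix.IsHurwitz {N : ℕ} (A : Matrix (Fin N) (Fin N) ℝ) : Prop :=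
  ∀ μ ∈ spectrum ℂ (A.map (Complex.ofReal)), μ.re < 0

open NormedSpace Filter

noncomputable def Matrix.gramianIntegrand {n m : Type*} [Fintype n] [DecidableEq n] [Fintype m]
    (A : Matrix n n ℝ) (B : Matrix n m ℝ) (t : ℝ) : Matrix n n ℝ :=
  exp (t • A) * B * Bᵀ * exp (t • Aᵀ)

section Gramian

variable {n m : Type*} [Fintype n] [DecidableEq n] [Fintype m] (A : Matrix n n ℝ)
  (B : Matrix n m ℝ)

theorem Matrix.gramianIntegrand_eq_mul_transpose (t : ℝ) :
    gramianIntegrand A B t = (exp (t • A) * B) * (exp (t • A) * B)ᵀ := by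
  simp [gramianIntegrand, transpose_mul, ← exp_transpose, Matrix.mul_assoc]

theorem Matrix.posSemidef_gramianIntegrand (t : ℝ) : (gramianIntegrand A B t).PosSemidef := by
  rw [gramianIntegrand_eq_mul_transpose, ← conjTranspose_eq_transpose_of_trivial]
  exact posSemidef_self_mul_conjTranspose _

theorem Matrix.gramianIntegrand_zero : gramianIntegrand A B 0 = B * Bᵀ := by
  simp [gramianIntegrand]

end Gramian

theorem Module.End.exists_hasEigenvector_of_commute {K V : Type*} [Field K] [IsAlgClosed K]
    [AddCommGroup V] [Module K V] [FiniteDimensional K V] {f g : Module.End K V}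
    (hfg : Commute f g) {ν : K} (hν : f.HasEigenvalue ν) :
    ∃ μ v, f.HasEigenvector ν v ∧ g.HasEigenvector μ v := by
  have hmaps : Set.MapsTo g (f.eigenspace ν) (f.eigenspace ν) :=
    Module.End.mapsTo_genEigenspace_of_comm hfg ν 1
  have : Nontrivial (f.eigenspace ν) := Submodule.nontrivial_iff_ne_bot.2 hν
  obtain ⟨μ, hμ⟩ := Module.End.exists_eigenvalue (g.restrict hmaps)
  obtain ⟨w, hw⟩ := hμ.exists_hasEigenvector
  exact ⟨μ, w, ⟨w.2, by simpa using hw.2⟩,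
    ⟨Module.End.mem_eigenspace_iff.2 (congrArg Subtype.val hw.apply_eq_smul), by simpa using hw.2⟩⟩

theorem exists_norm_pow_lt_one_of_spectralRadius_lt_one {A : Type*} [NormedRing A]
    [NormedAlgebra ℂ A] [CompleteSpace A] {a : A} (ha : spectralRadius ℂ a < 1) :
    ∃ k : ℕ, 0 < k ∧ ‖a ^ k‖ < 1 := by
  obtain ⟨k, hk, hk0⟩ :=
    ((spectrum.pow_nnnorm_pow_one_div_tendsto_nhds_spectralRadius a).eventually_lt_const ha
      |>.and (eventually_gt_atTop 0)).exists
  refine ⟨k, hk0, ?_⟩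
  by_contra! h
  have h1 : (1 : ENNReal) ≤ ‖a ^ k‖₊ := by exact_mod_cast h
  exact (ENNReal.one_le_rpow h1 (by positivity)).not_gt hk

theorem exists_norm_le_exp_neg_of_add_eq_mul {R : Type*} [SeminormedRing R] {f : ℝ → R} {T : ℝ}
    (hf : ContinuousOn f (Set.Icc 0 T)) (hadd : ∀ s t, 0 ≤ s → 0 ≤ t → f (s + t) = f s * f t)
    (hT : 0 < T) (hfT : ‖f T‖ < 1) :
    ∃ c > 0, ∃ C, ∀ t, 0 ≤ t → ‖f t‖ ≤ C * Real.exp (-(c * t)) := by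
  obtain ⟨r, hfTr, hr1⟩ := exists_between hfT
  have hr0 : 0 < r := (norm_nonneg _).trans_lt hfTr
  obtain ⟨M, hM⟩ := isCompact_Icc.exists_bound_of_continuousOn hf
  have hM0 : 0 ≤ M := (norm_nonneg _).trans (hM 0 ⟨le_rfl, hT.le⟩)
  have hstep : ∀ n : ℕ, ∀ s ∈ Set.Icc 0 T, ‖f (n * T + s)‖ ≤ r ^ n * M := by
    intro n
    induction n with
    | zero => simpa using hM
    | succ n ih =>
      intro s hs
      have hns : 0 ≤ n * T + s := by have := hs.1; positivity
      calc ‖f ((n + 1 : ℕ) * T + s)‖ = ‖f T * f (n * T + s)‖ := by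
            rw [← hadd _ _ hT.le hns]; push_cast; ring_nf
        _ ≤ ‖f T‖ * ‖f (n * T + s)‖ := norm_mul_le _ _
        _ ≤ r * (r ^ n * M) := by gcongr; exact ih s hs
        _ = r ^ (n + 1) * M := by ring
  set c := -Real.log r / T
  have hc : 0 < c := div_pos (neg_pos.2 (Real.log_neg hr0 hr1)) hT
  have hcT : c * T = -Real.log r := div_mul_cancel₀ _ hT.ne'
  refine ⟨c, hc, M / r, fun t ht => ?_⟩
  set n := ⌊t / T⌋₊
  have hnt : n * T ≤ t := (le_div_iff₀ hT).1 (Nat.floor_le (by positivity))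
  have htn : t < (n + 1) * T := (div_lt_iff₀ hT).1 (Nat.lt_floor_add_one _)
  have hrn : r ^ n = Real.exp (-(c * (n * T))) := by
    rw [← Real.exp_log hr0, ← Real.exp_nat_mul]
    congr 1
    linear_combination (↑n : ℝ) * hcT
  calc ‖f t‖ = ‖f (n * T + (t - n * T))‖ := by ring_nf
    _ ≤ r ^ n * M := hstep n _ ⟨by linarith, by linarith⟩
    _ = M / r * Real.exp (-(c * (n * T + T))) := by
      rw [hrn, mul_add, neg_add, Real.exp_add, hcT, neg_neg, Real.exp_log hr0]
      field_simp
    _ ≤ M / r * Real.exp (-(c * t)) := by gcongr; nlinarith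

section Frobenius

/- The Frobenius norm is submultiplicative, invariant under transposition and under the
entrywise embedding `ℝ → ℂ`. -/
open scoped Matrix.Norms.Frobenius

variable {n : Type*} [Fintype n] [DecidableEq n]

theorem Matrix.exp_mulVec_of_mulVec_eq_smul {𝕂 : Type*} [RCLike 𝕂] {M : Matrix n n 𝕂} {μ : 𝕂}
    {v : n → 𝕂} (hv : M *ᵥ v = μ • v) : exp M *ᵥ v = exp μ • v := by
  have hpow : ∀ k : ℕ, M ^ k *ᵥ v = μ ^ k • v := fun k => by
    induction k with
    | zero => simp
    | succ k ih => rw [pow_succ', ← mulVec_mulVec, ih, mulVec_smul, hv, smul_smul, pow_succ]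
  let L : Matrix n n 𝕂 →L[𝕂] n → 𝕂 :=
    LinearMap.toContinuousLinearMap ((LinearMap.applyₗ v).comp Matrix.toLin'.toLinearMap)
  have h1 := (exp_series_hasSum_exp' (𝕂 := 𝕂) M).mapL L
  have h2 := (exp_series_hasSum_exp' (𝕂 := 𝕂) μ).smul_const v
  refine h1.unique ?_
  convert h2 using 1
  funext k
  simp only [L, LinearMap.coe_toContinuousLinearMap', LinearMap.coe_comp, Function.comp_apply,
    LinearEquiv.coe_coe, LinearMap.applyₗ_apply_apply, Matrix.toLin'_apply, smul_mulVec, hpow,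
    smul_smul, smul_eq_mul]

theorem Matrix.exists_mem_spectrum_exp_eq (M : Matrix n n ℂ) {ν : ℂ}
    (hν : ν ∈ spectrum ℂ (exp M)) : ∃ μ ∈ spectrum ℂ M, Complex.exp μ = ν := by
  rw [← Matrix.spectrum_toLin', ← Module.End.hasEigenvalue_iff_mem_spectrum] at hν
  obtain ⟨μ, v, hexp, hM⟩ := Module.End.exists_hasEigenvector_of_commute
    (g := toLin' M) (((Commute.refl M).exp_left).map Matrix.toLinAlgEquiv') hν
  refine ⟨μ, ?_, smul_left_injective ℂ hM.2 ?_⟩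
  · rw [← Matrix.spectrum_toLin', ← Module.End.hasEigenvalue_iff_mem_spectrum]
    exact Module.End.hasEigenvalue_of_hasEigenvector hM
  · show Complex.exp μ • v = ν • v
    rw [Complex.exp_eq_exp_ℂ, ← exp_mulVec_of_mulVec_eq_smul (by simpa using hM.apply_eq_smul)]
    simpa using hexp.apply_eq_smul

theorem Matrix.spectralRadius_exp_lt_one {M : Matrix n n ℂ}
    (hM : ∀ μ ∈ spectrum ℂ M, μ.re < 0) : spectralRadius ℂ (exp M) < 1 := by
  rcases (spectrum ℂ (exp M)).eq_empty_or_nonempty with h | h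
  · simp [spectralRadius, h]
  obtain ⟨z, hz, hzr⟩ := spectrum.exists_nnnorm_eq_spectralRadius_of_nonempty h
  obtain ⟨μ, hμ, rfl⟩ := exists_mem_spectrum_exp_eq M hz
  rw [← hzr, ENNReal.coe_lt_one_iff, ← NNReal.coe_lt_coe, coe_nnnorm, Complex.norm_exp]
  simpa using hM μ hμ

theorem Matrix.map_ofReal_exp (A : Matrix n n ℝ) :
    (exp A).map Complex.ofReal = exp (A.map Complex.ofReal) :=
  map_exp Complex.ofRealHom.mapMatrix (continuous_id.matrix_map Complex.continuous_ofReal) A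

theorem Matrix.IsHurwitz.exists_norm_exp_smul_le {N : ℕ} {A : Matrix (Fin N) (Fin N) ℝ}
    (hA : A.IsHurwitz) : ∃ c > 0, ∃ C, ∀ t, 0 ≤ t → ‖exp (t • A)‖ ≤ C * Real.exp (-(c * t)) := by
  have hρ : spectralRadius ℂ (exp (A.map Complex.ofReal)) < 1 := spectralRadius_exp_lt_one hA
  obtain ⟨k, hk, hlt⟩ := exists_norm_pow_lt_one_of_spectralRadius_lt_one hρ
  refine exists_norm_le_exp_neg_of_add_eq_mul
    (exp_continuous.comp (continuous_id.smul continuous_const)).continuousOn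
    (fun s t _ _ => by
      rw [add_smul, exp_add_of_commute _ _ ((Commute.refl A).smul_left s |>.smul_right t)])
    (Nat.cast_pos.2 hk) ?_
  have hmap : (exp A ^ k).map Complex.ofReal = exp (A.map Complex.ofReal) ^ k := by
    rw [← map_ofReal_exp]; exact Matrix.map_pow _ Complex.ofRealHom k
  rwa [Nat.cast_smul_eq_nsmul, exp_nsmul, ← frobenius_norm_map_eq _ Complex.ofReal
    Complex.norm_real, hmap]

theorem Matrix.norm_apply_le_frobenius_norm {p q α : Type*} [Fintype p] [Fintype q]
    [SeminormedAddCommGroup α] (M : Matrix p q α) (i : p) (j : q) : ‖M i j‖ ≤ ‖M‖ :=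
  (PiLp.norm_apply_le (WithLp.toLp 2 (M i)) j).trans
    (PiLp.norm_apply_le (WithLp.toLp 2 fun i => WithLp.toLp 2 (M i)) i)

theorem Matrix.IsHurwitz.exists_norm_gramianIntegrand_apply_le {N m : ℕ}
    {A : Matrix (Fin N) (Fin N) ℝ} (hA : A.IsHurwitz) (B : Matrix (Fin N) (Fin m) ℝ) :
    ∃ c > 0, ∃ K ≥ 0, ∀ t, 0 ≤ t → ∀ i j,
      ‖gramianIntegrand A B t i j‖ ≤ K * Real.exp (-(c * t)) := by
  obtain ⟨c, hc, C, hC⟩ := hA.exists_norm_exp_smul_le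
  refine ⟨2 * c, by positivity, C ^ 2 * ‖B‖ ^ 2, by positivity, fun t ht i j => ?_⟩
  calc ‖gramianIntegrand A B t i j‖ ≤ ‖gramianIntegrand A B t‖ := norm_apply_le_frobenius_norm _ i j
    _ ≤ ‖exp (t • A) * B‖ * ‖(exp (t • A) * B)ᵀ‖ := by
        rw [gramianIntegrand_eq_mul_transpose]; exact frobenius_norm_mul _ _
    _ = ‖exp (t • A) * B‖ ^ 2 := by rw [frobenius_norm_transpose, sq]
    _ ≤ (C * Real.exp (-(c * t)) * ‖B‖) ^ 2 := by
        gcongr; exact (frobenius_norm_mul (exp (t • A)) B).trans (by gcongr; exact hC t ht)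
    _ = C ^ 2 * ‖B‖ ^ 2 * Real.exp (-(2 * c * t)) := by
        rw [show -(2 * c * t) = -(c * t) + -(c * t) by ring, Real.exp_add]; ring

/- Stated through slopes, which only involve the topology, so that it transfers to the entrywise
norm used below. -/
theorem Matrix.tendsto_slope_gramianIntegrand {m : Type*} [Fintype m] (A : Matrix n n ℝ)
    (B : Matrix n m ℝ) (t : ℝ) :
    Tendsto (slope (gramianIntegrand A B) t) (nhdsWithin t {t}ᶜ)
      (nhds (A * gramianIntegrand A B t + gramianIntegrand A B t * Aᵀ)) := by
  have h := ((hasDerivAt_exp_smul_const' (𝕂 := ℝ) A t).mul_const (B * Bᵀ)).mul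
    (hasDerivAt_exp_smul_const (𝕂 := ℝ) Aᵀ t)
  have hG : gramianIntegrand A B = fun u => exp (u • A) * (B * Bᵀ) * exp (u • Aᵀ) := by
    ext1 u; simp [gramianIntegrand, Matrix.mul_assoc]
  rw [hG]
  exact hasDerivAt_iff_tendsto_slope.1 (h.congr_deriv (by simp only [Matrix.mul_assoc]; rfl))

end Frobenius

attribute [local instance] Matrix.normedAddCommGroup Matrix.normedSpace

/- Instance search for `ContinuousENorm (Matrix n n ℝ)` finds the product topology first and then
fails, so integrability of matrix-valued maps is written with the instance given explicitly. -/

theorem integrableOn_Ici_of_norm_le_exp_neg {E : Type*} [NormedAddCommGroup E] {f : ℝ → E}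
    (hf : Continuous f) {c K : ℝ} (hc : 0 < c)
    (hfK : ∀ t, 0 ≤ t → ‖f t‖ ≤ K * Real.exp (-(c * t))) : IntegrableOn f (Set.Ici 0) := by
  rw [integrableOn_Ici_iff_integrableOn_Ioi]
  refine Integrable.mono' ((exp_neg_integrableOn_Ioi 0 hc).const_mul K) hf.aestronglyMeasurable ?_
  filter_upwards [self_mem_ae_restrict measurableSet_Ioi] with t ht
  simpa only [neg_mul] using hfK t ht.le

theorem tendsto_zero_of_norm_le_exp_neg {E : Type*} [NormedAddCommGroup E] {f : ℝ → E}
    {c K : ℝ} (hc : 0 < c) (hfK : ∀ t, 0 ≤ t → ‖f t‖ ≤ K * Real.exp (-(c * t))) :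
    Tendsto f atTop (nhds 0) := by
  refine squeeze_zero_norm' (eventually_atTop.2 ⟨0, hfK⟩) ?_
  simpa using ((Real.tendsto_exp_atBot.comp
    (tendsto_neg_atTop_atBot.comp (tendsto_id.const_mul_atTop hc))).const_mul K)

theorem Matrix.posSemidef_integral {X n : Type*} [MeasurableSpace X] {μ : Measure X} [Fintype n]
    {f : X → Matrix n n ℝ} (hf : @Integrable _ _ SeminormedAddGroup.toContinuousENorm _ _ f μ)
    (hpsd : ∀ x, (f x).PosSemidef) : (∫ x, f x ∂μ).PosSemidef := by
  refine posSemidef_iff_dotProduct_mulVec.2 ⟨?_, fun v => ?_⟩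
  · rw [IsHermitian, conjTranspose_eq_transpose_of_trivial]
    calc (∫ x, f x ∂μ)ᵀ = ∫ x, (f x)ᵀ ∂μ :=
          ((transposeLinearEquiv n n ℝ ℝ).toContinuousLinearEquiv.integral_comp_comm f).symm
      _ = ∫ x, f x ∂μ := by
          congr 1 with x : 1
          rw [← conjTranspose_eq_transpose_of_trivial]; exact (hpsd x).1
  · let q : Matrix n n ℝ →ₗ[ℝ] ℝ :=
      { toFun := fun M => star v ⬝ᵥ M *ᵥ v
        map_add' := by simp [add_mulVec]
        map_smul' := by simp [smul_mulVec] }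
    calc 0 ≤ ∫ x, q (f x) ∂μ := integral_nonneg fun x => (hpsd x).dotProduct_mulVec_nonneg v
      _ = q (∫ x, f x ∂μ) := q.toContinuousLinearMap.integral_comp_comm hf

theorem Matrix.mul_integral_add_integral_mul_eq_neg {n : Type*} [Fintype n] [DecidableEq n]
    (A A' : Matrix n n ℝ) {G : ℝ → Matrix n n ℝ}
    (hG : ∀ t, 0 ≤ t → HasDerivAt G (A * G t + G t * A') t)
    (hint : @IntegrableOn _ _ _ _ SeminormedAddGroup.toContinuousENorm G (Set.Ioi 0) volume)
    (hlim : Tendsto G atTop (nhds 0)) :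
    A * (∫ t in Set.Ioi 0, G t) + (∫ t in Set.Ioi 0, G t) * A' = -G 0 := by
  let L := (LinearMap.mulLeft ℝ A).toContinuousLinearMap
  let R := (LinearMap.mulRight ℝ A').toContinuousLinearMap
  have hsum : ∫ t in Set.Ioi 0, (A * G t + G t * A') =
      A * (∫ t in Set.Ioi 0, G t) + (∫ t in Set.Ioi 0, G t) * A' :=
    (integral_add (L.integrable_comp hint) (R.integrable_comp hint)).trans
      (congr_arg₂ (· + ·) (L.integral_comp_comm hint) (R.integral_comp_comm hint))
  rw [← hsum, integral_Ioi_of_hasDerivAt_of_tendsto' hG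
    ((L.integrable_comp hint).add (R.integrable_comp hint)) hlim, zero_sub]

theorem Matrix.hasDerivAt_gramianIntegrand {n m : Type*} [Fintype n] [DecidableEq n] [Fintype m]
    (A : Matrix n n ℝ) (B : Matrix n m ℝ) (t : ℝ) :
    HasDerivAt (gramianIntegrand A B)
      (A * gramianIntegrand A B t + gramianIntegrand A B t * Aᵀ) t :=
  hasDerivAt_iff_tendsto_slope.2 (tendsto_slope_gramianIntegrand A B t)

/-- For a Hurwitz matrix `A` and any `B`, the function
`t ↦ e^{tA} B Bᵀ e^{tAᵀ}` is integrable on `[0,∞)`, and the controllability Gramian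
`P = ∫₀^∞ e^{tA} B Bᵀ e^{tAᵀ} dt` is symmetric positive semidefinite and satisfies the
Lyapunov equation `A P + P Aᵀ = -B Bᵀ`. -/
theorem gramian_integrable_posSemidef_lyapunov {N m : ℕ}
    (A : Matrix (Fin N) (Fin N) ℝ) (B : Matrix (Fin N) (Fin m) ℝ)
    (hA : A.IsHurwitz) :
    @IntegrableOn _ _ _ _ SeminormedAddGroup.toContinuousENorm
      (fun t : ℝ =>
        NormedSpace.exp (t • A) * B * Bᵀ * NormedSpace.exp (t • Aᵀ)) (Set.Ici 0) volume ∧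
    (∫ t in Set.Ici (0 : ℝ),
        NormedSpace.exp (t • A) * B * Bᵀ * NormedSpace.exp (t • Aᵀ)).IsSymm ∧
    (∫ t in Set.Ici (0 : ℝ),
        NormedSpace.exp (t • A) * B * Bᵀ * NormedSpace.exp (t • Aᵀ)).PosSemidef ∧
    A * (∫ t in Set.Ici (0 : ℝ),
          NormedSpace.exp (t • A) * B * Bᵀ * NormedSpace.exp (t • Aᵀ)) +
      (∫ t in Set.Ici (0 : ℝ),
          NormedSpace.exp (t • A) * B * Bᵀ * NormedSpace.exp (t • Aᵀ)) * Aᵀ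
      = -(B * Bᵀ) := by
  obtain ⟨c, hc, K, hK0, hK⟩ := hA.exists_norm_gramianIntegrand_apply_le B
  have hbound : ∀ t, 0 ≤ t → ‖gramianIntegrand A B t‖ ≤ K * Real.exp (-(c * t)) := fun t ht =>
    (norm_le_iff (by positivity)).2 (hK t ht)
  have hderiv := hasDerivAt_gramianIntegrand A B
  have hint := integrableOn_Ici_of_norm_le_exp_neg
    (continuous_iff_continuousAt.2 fun t => (hderiv t).continuousAt) hc hbound
  have hpsd := posSemidef_integral hint (posSemidef_gramianIntegrand A B)
  refine ⟨hint, isHermitian_iff_isSymm.1 hpsd.1, hpsd, ?_⟩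
  have hlyap := mul_integral_add_integral_mul_eq_neg A Aᵀ (fun t _ => hderiv t)
    (hint.mono_set Set.Ioi_subset_Ici_self) (tendsto_zero_of_norm_le_exp_neg hc hbound)
  rw [← integral_Ici_eq_integral_Ioi, gramianIntegrand_zero] at hlyap
  exact hlyap
end

section
/- Let A be a real N×N Hurwitz matrix. If X and Y are real N×N matrices satisfying A X + X Aᵀ = A Y + Y Aᵀ, then X = Y. In particular, for any real N×m matrix B the Lyapunov equation A P + P Aᵀ = −B Bᵀ has at most one solution P. -/
open Matrix

open Polynomial

/-!
A Hurwitz matrix `A` and `-Aᵀ` have disjoint spectra, the first in the open left half-plane and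
the second in the open right one. If `A D + D Aᵀ = 0`, then `A D = D (-Aᵀ)`, hence
`p(A) D = D p(-Aᵀ)` for every polynomial `p`. Taking for `p` the characteristic polynomial of `A`
kills the left side (Cayley–Hamilton), while `p(-Aᵀ)` is invertible by the spectral mapping
theorem, since no eigenvalue of `-Aᵀ` is a root of `p`. So `D = 0`.
-/

namespace Matrix

variable {m n : Type*} [Fintype m] [Fintype n] [DecidableEq m] [DecidableEq n]

theorem pow_mul_eq_mul_pow_of_mul_eq_mul {R : Type*} [Semiring R] {M : Matrix m m R}
    {M' : Matrix n n R} {Z : Matrix m n R} (h : M * Z = Z * M') (k : ℕ) :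
    M ^ k * Z = Z * M' ^ k := by
  induction k with
  | zero => simp
  | succ k ih =>
    rw [pow_succ, Matrix.mul_assoc, h, ← Matrix.mul_assoc, ih, Matrix.mul_assoc, ← pow_succ]

theorem aeval_mul_eq_mul_aeval_of_mul_eq_mul {R : Type*} [CommSemiring R] {M : Matrix m m R}
    {M' : Matrix n n R} {Z : Matrix m n R} (h : M * Z = Z * M') (p : R[X]) :
    aeval M p * Z = Z * aeval M' p := by
  simp only [aeval_eq_sum_range, Matrix.sum_mul, Matrix.mul_sum, Matrix.smul_mul,
    Matrix.mul_smul, pow_mul_eq_mul_pow_of_mul_eq_mul h]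

/-- Sylvester's theorem. -/
theorem eq_zero_of_mul_eq_mul_of_disjoint_spectrum {𝕜 : Type*} [Field 𝕜] [IsAlgClosed 𝕜]
    {M : Matrix m m 𝕜} {M' : Matrix n n 𝕜} {Z : Matrix m n 𝕜} (h : M * Z = Z * M')
    (hd : Disjoint (spectrum 𝕜 M) (spectrum 𝕜 M')) : Z = 0 := by
  rcases isEmpty_or_nonempty m with _ | _
  · exact Subsingleton.elim _ _
  have hdeg : 0 < M.charpoly.degree := by
    rw [charpoly_degree_eq_dim]
    exact_mod_cast Fintype.card_pos
  have hunit : IsUnit (aeval M' M.charpoly).det := by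
    rw [← isUnit_iff_isUnit_det, ← spectrum.zero_notMem_iff 𝕜,
      spectrum.map_polynomial_aeval_of_degree_pos _ _ hdeg]
    rintro ⟨μ, hμ', hroot⟩
    exact hd.ne_of_mem (mem_spectrum_iff_isRoot_charpoly.mpr hroot) hμ' rfl
  have hkill : Z * aeval M' M.charpoly = 0 := by
    rw [← aeval_mul_eq_mul_aeval_of_mul_eq_mul h, aeval_self_charpoly, Matrix.zero_mul]
  calc Z = Z * (aeval M' M.charpoly * (aeval M' M.charpoly)⁻¹) := by
        rw [mul_nonsing_inv _ hunit, Matrix.mul_one]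
    _ = 0 := by rw [← Matrix.mul_assoc, hkill, Matrix.zero_mul]

theorem spectrum_transpose {R : Type*} [CommRing R] (M : Matrix n n R) :
    spectrum R Mᵀ = spectrum R M := by
  ext μ
  simp only [mem_spectrum_iff_not_isUnit_eval_charpoly, charpoly_transpose]

theorem disjoint_spectrum_neg_transpose_of_re_neg {M : Matrix n n ℂ}
    (hM : ∀ μ ∈ spectrum ℂ M, μ.re < 0) : Disjoint (spectrum ℂ M) (spectrum ℂ (-Mᵀ)) := by
  rw [Set.disjoint_left, ← spectrum.neg_eq, spectrum_transpose]
  intro μ hμ hμ'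
  have := hM (-μ) hμ'
  simp only [Complex.neg_re] at this
  linarith [hM μ hμ]

theorem IsHurwitz.lyapunov_injective {N : ℕ} {A : Matrix (Fin N) (Fin N) ℝ}
    (hA : A.IsHurwitz) : Function.Injective fun X => A * X + X * Aᵀ := by
  intro X Y hXY
  have hD : A * (X - Y) = (X - Y) * -Aᵀ := by
    rw [Matrix.mul_neg, eq_neg_iff_add_eq_zero, Matrix.mul_sub, Matrix.sub_mul, sub_add_sub_comm]
    exact sub_eq_zero.mpr hXY
  have hDℂ := congrArg Complex.ofRealHom.mapMatrix hD
  simp only [map_mul, map_neg] at hDℂ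
  have hDℂ_zero := eq_zero_of_mul_eq_mul_of_disjoint_spectrum hDℂ
    (disjoint_spectrum_neg_transpose_of_re_neg hA)
  exact sub_eq_zero.mp <| (map_eq_zero_iff _ (map_injective Complex.ofReal_injective)).mp hDℂ_zero

end Matrix

/-- For a Hurwitz matrix `A`, the Lyapunov operator `X ↦ A X + X Aᵀ` is
injective: if `A X + X Aᵀ = A Y + Y Aᵀ` then `X = Y`.  In particular, for any `B` the
Lyapunov equation `A P + P Aᵀ = -B Bᵀ` has at most one solution. -/
theorem lyapunov_solution_unique {N : ℕ}
    (A : Matrix (Fin N) (Fin N) ℝ) (hA : A.IsHurwitz)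
    (X Y : Matrix (Fin N) (Fin N) ℝ)
    (hXY : A * X + X * Aᵀ = A * Y + Y * Aᵀ) :
    X = Y ∧
      ∀ (m : ℕ) (B : Matrix (Fin N) (Fin m) ℝ) (P₁ P₂ : Matrix (Fin N) (Fin N) ℝ),
        A * P₁ + P₁ * Aᵀ = -(B * Bᵀ) → A * P₂ + P₂ * Aᵀ = -(B * Bᵀ) → P₁ = P₂ :=
  ⟨hA.lyapunov_injective hXY, fun _ _ _ _ h₁ h₂ => hA.lyapunov_injective (h₁.trans h₂.symm)⟩
end

section
/- Let Ã be an invertible real N×N matrix, U and V real N×ℓ matrices, G an invertible real ℓ×ℓ matrix such that G⁻¹ − Vᵀ Ã⁻¹ U is invertible, and let c > 0. Suppose A := Ã − U G Vᵀ is invertible. Define Ã⁺ := (1/2)(c Ã + c⁻¹ Ã⁻¹), U⁺ := [U, Ã⁻¹U] (N×2ℓ), V⁺ := [V, Ã⁻ᵀV] (N×2ℓ), and the 2ℓ×2ℓ block-diagonal matrix G⁺ := (1/2) diag(c G, −c⁻¹ (G⁻¹ − Vᵀ Ã⁻¹ U)⁻¹). Then the Newton sign-function iterate of A preserves the low-rank-update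 structure: (1/2)(c A + c⁻¹ A⁻¹) = Ã⁺ − U⁺ G⁺ (V⁺)ᵀ. -/
/-! By the Woodbury identity, `A⁻¹ = Ã⁻¹ + Ã⁻¹ U S⁻¹ Vᵀ Ã⁻¹` with `S = G⁻¹ - Vᵀ Ã⁻¹ U`, so
`(1/2)(c A + c⁻¹ A⁻¹)` is `Ã⁺` minus two low-rank terms, `(c/2) U G Vᵀ` and
`-(1/(2c)) (Ã⁻¹ U) S⁻¹ (Ã⁻ᵀ V)ᵀ`; these are exactly the two diagonal blocks of
`U⁺ G⁺ (V⁺)ᵀ`. -/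

open Matrix

namespace Matrix

theorem fromCols_mul_fromBlocks_zero_zero_mul_transpose_fromCols {n k₁ k₂ α : Type*}
    [Fintype k₁] [Fintype k₂] [Semiring α]
    (U₁ V₁ : Matrix n k₁ α) (U₂ V₂ : Matrix n k₂ α) (P : Matrix k₁ k₁ α) (Q : Matrix k₂ k₂ α) :
    fromCols U₁ U₂ * fromBlocks P 0 0 Q * (fromCols V₁ V₂)ᵀ = U₁ * P * V₁ᵀ + U₂ * Q * V₂ᵀ := by
  rw [transpose_fromCols, fromCols_mul_fromBlocks, fromCols_mul_fromRows]
  simp only [Matrix.mul_zero, add_zero, zero_add]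

variable {n m α : Type*} [Fintype n] [DecidableEq n] [Fintype m] [DecidableEq m] [CommRing α]

theorem inv_neg (A : Matrix n n α) : (-A)⁻¹ = -A⁻¹ := by
  by_cases hA : IsUnit A
  · exact inv_eq_right_inv <| by
      rw [neg_mul_neg, mul_nonsing_inv A ((isUnit_iff_isUnit_det A).mp hA)]
  · rw [nonsing_inv_eq_ringInverse, nonsing_inv_eq_ringInverse, Ring.inverse_non_unit _ hA,
      Ring.inverse_non_unit _ (by rwa [IsUnit.neg_iff]), neg_zero]

/-- The Woodbury identity for a subtracted low-rank term. -/
theorem sub_mul_mul_inv_eq_add (A : Matrix n n α) (U : Matrix n m α) (C : Matrix m m α)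
    (V : Matrix m n α) (hA : IsUnit A) (hC : IsUnit C) (hAC : IsUnit (C⁻¹ - V * A⁻¹ * U)) :
    (A - U * C * V)⁻¹ = A⁻¹ + A⁻¹ * U * (C⁻¹ - V * A⁻¹ * U)⁻¹ * V * A⁻¹ := by
  have hneg : (-C)⁻¹ + V * A⁻¹ * U = -(C⁻¹ - V * A⁻¹ * U) := by
    rw [inv_neg]
    abel
  have h := add_mul_mul_inv_eq_sub A U (-C) V hA hC.neg (by rw [hneg]; exact hAC.neg)
  rw [hneg, inv_neg, Matrix.mul_neg, Matrix.neg_mul, ← sub_eq_add_neg] at h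
  rw [h]
  simp only [Matrix.mul_neg, Matrix.neg_mul, sub_neg_eq_add]

end Matrix

theorem sign_function_newton_step_structured_general {N ℓ : ℕ}
    (Atil : Matrix (Fin N) (Fin N) ℝ) (U V : Matrix (Fin N) (Fin ℓ) ℝ)
    (G : Matrix (Fin ℓ) (Fin ℓ) ℝ) (c : ℝ)
    (hAtil : IsUnit Atil) (hG : IsUnit G)
    (hSMW : IsUnit (G⁻¹ - Vᵀ * Atil⁻¹ * U)) :
    (2 : ℝ)⁻¹ • (c • (Atil - U * G * Vᵀ) + c⁻¹ • (Atil - U * G * Vᵀ)⁻¹)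
      = (2 : ℝ)⁻¹ • (c • Atil + c⁻¹ • Atil⁻¹) -
          fromCols U (Atil⁻¹ * U) *
            fromBlocks ((c / 2) • G) 0 0
              ((-(1 / (2 * c))) • (G⁻¹ - Vᵀ * Atil⁻¹ * U)⁻¹) *
            (fromCols V (Atil⁻¹ᵀ * V))ᵀ := by
  rw [sub_mul_mul_inv_eq_add Atil U G Vᵀ hAtil hG hSMW,
    fromCols_mul_fromBlocks_zero_zero_mul_transpose_fromCols, transpose_mul, transpose_transpose,
    one_div, mul_inv, div_eq_inv_mul]
  simp only [Matrix.mul_smul, Matrix.smul_mul, Matrix.mul_assoc]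
  module

/-- The Newton sign-function iterate preserves the low-rank-update
structure `A = Ã - U G Vᵀ`: with `Ã⁺ = (1/2)(c Ã + c⁻¹ Ã⁻¹)`, `U⁺ = [U, Ã⁻¹U]`,
`V⁺ = [V, Ã⁻ᵀV]` and `G⁺ = (1/2) diag(c G, -c⁻¹ (G⁻¹ - Vᵀ Ã⁻¹ U)⁻¹)` (using the
Sherman–Morrison–Woodbury formula), one has
`(1/2)(c A + c⁻¹ A⁻¹) = Ã⁺ - U⁺ G⁺ (V⁺)ᵀ`. -/
theorem sign_function_newton_step_structured {N ℓ : ℕ}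
    (Atil : Matrix (Fin N) (Fin N) ℝ) (U V : Matrix (Fin N) (Fin ℓ) ℝ)
    (G : Matrix (Fin ℓ) (Fin ℓ) ℝ) (c : ℝ)
    (hAtil : IsUnit Atil) (hG : IsUnit G)
    (hSMW : IsUnit (G⁻¹ - Vᵀ * Atil⁻¹ * U))
    (hc : 0 < c)
    (hA : IsUnit (Atil - U * G * Vᵀ)) :
    (2 : ℝ)⁻¹ • (c • (Atil - U * G * Vᵀ) + c⁻¹ • (Atil - U * G * Vᵀ)⁻¹)
      = (2 : ℝ)⁻¹ • (c • Atil + c⁻¹ • Atil⁻¹) -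
          fromCols U (Atil⁻¹ * U) *
            fromBlocks ((c / 2) • G) 0 0
              ((-(1 / (2 * c))) • (G⁻¹ - Vᵀ * Atil⁻¹ * U)⁻¹) *
            (fromCols V (Atil⁻¹ᵀ * V))ᵀ :=
  sign_function_newton_step_structured_general Atil U V G c hAtil hG hSMW
end
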